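/- Let G and H be finite abelian groups with d = |G|, and suppose f : G → H is differentially 1-uniform. Then for every integer m ≥ 2|H| there exist m orthonormal bases B_0,…,B_{m−1} of ℂ^d, with B_a = {e^a_0,…,e^a_{d−1}}, and positive weights w_0,…,w_{m−1} with ∑_a w_a = 1/d, such that ∑_{a,b=0}^{m−1} w_a w_b ∑_{j,k=0}^{d−1} |⟨e^a_j, e^b_k⟩|^4 = 2/(d(d+1)); that is, there is a weighted 2-design in ℂP^{d−1} formed from the union of m orthonormal bases of ℂ^d. -/

import Mathlib

/-- A function `f : G → H` between additive groups is differentially 1-uniform if for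
every `(a, b) ≠ (0, 0)` the equation `f (x + a) - f x = b` has at most one solution. -/
def DiffOneUniform {G H : Type*} [AddGroup G] [AddGroup H] (f : G → H) : Prop :=
  ∀ a : G, ∀ b : H, ¬(a = 0 ∧ b = 0) →
    ∀ x y : G, f (x + a) - f x = b → f (y + a) - f y = b → x = y

/-!
The union is the standard basis of `ℂ^G`, with weight `1/(d(d+1))`, together with, for each
character `ψ` of `H`, the Fourier basis of `G` twisted by the phase `ψ ∘ f`, with weight
`1/(|H|(d+1))`. The twisted bases are unbiased with respect to the standard one, and by
orthogonality of characters the fourth powers of their mutual inner products add up to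
`|H|² E / d²`, where `E` is the additive energy of the graph of `f`. Differential 1-uniformity
makes `x ↦ f (x + a) - f x` injective for `a ≠ 0`, which forces `E = d(2d - 1)` and hence the
weighted frame potential `2/(d(d+1))`. Repeating bases and splitting their weights among the
copies leaves the frame potential unchanged, so the `|H| + 1` bases can be spread over `m` slots.
-/

open Finset Function
open scoped InnerProductSpace ComplexConjugate

noncomputable section

section FramePotential

variable {E F : Type*} [SeminormedAddCommGroup E] [InnerProductSpace ℂ E]
  [SeminormedAddCommGroup F] [InnerProductSpace ℂ F] {ι ι' κ κ' J : Type*}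
  [Fintype ι] [Fintype ι'] [Fintype κ] [Fintype κ'] [Fintype J]

def framePotential (u : ι → E) (v : κ → E) : ℝ :=
  ∑ j, ∑ k, ‖⟪u j, v k⟫_ℂ‖ ^ 4

def weightedFramePotential (e : J → ι → E) (w : J → ℝ) : ℝ :=
  ∑ a, ∑ b, w a * w b * framePotential (e a) (e b)

lemma framePotential_comp_equiv (u : ι → E) (v : κ → E) (σ : ι' ≃ ι) (τ : κ' ≃ κ) :
    framePotential (u ∘ σ) (v ∘ τ) = framePotential u v := by
  simp only [framePotential, comp_apply, Equiv.sum_comp σ (fun j => ∑ k, ‖⟪u j, v (τ k)⟫_ℂ‖ ^ 4)]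
  exact sum_congr rfl fun j _ => Equiv.sum_comp τ (fun k => ‖⟪u j, v k⟫_ℂ‖ ^ 4)

lemma framePotential_map (L : E ≃ₗᵢ[ℂ] F) (u : ι → E) (v : κ → E) :
    framePotential (L ∘ u) (L ∘ v) = framePotential u v := by
  simp only [framePotential, comp_apply, LinearIsometryEquiv.inner_map_map]

lemma framePotential_comm (u : ι → E) (v : κ → E) :
    framePotential u v = framePotential v u := by
  simp only [framePotential, norm_inner_symm (u _)]
  exact sum_comm

lemma framePotential_eq_of_norm_inner_eq {u : ι → E} {v : κ → E} {c : ℝ}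
    (h : ∀ j k, ‖⟪u j, v k⟫_ℂ‖ = c) :
    framePotential u v = Fintype.card ι * Fintype.card κ * c ^ 4 := by
  simp [framePotential, h, mul_assoc]

lemma Orthonormal.framePotential_self {u : ι → E} (hu : Orthonormal ℂ u) :
    framePotential u u = Fintype.card ι := by
  classical
  have h : ∀ j k, ‖⟪u j, u k⟫_ℂ‖ ^ 4 = if j = k then 1 else 0 := fun j k => by
    rw [orthonormal_iff_ite.1 hu]; split_ifs <;> simp
  simp [framePotential, h]

end FramePotential

section FiberWeight

variable {ι J : Type*} [Fintype ι] [DecidableEq J]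

def fiberWeight (p : ι → J) (W : J → ℝ) (i : ι) : ℝ :=
  W (p i) / #{j | p j = p i}

lemma fiberWeight_pos {p : ι → J} {W : J → ℝ} {i : ι} (hW : 0 < W (p i)) :
    0 < fiberWeight p W i :=
  div_pos hW (Nat.cast_pos.2 (card_pos.2 ⟨i, by simp⟩))

variable [Fintype J] {p : ι → J}

lemma sum_fiberWeight_mul (hp : Surjective p) (W F : J → ℝ) :
    ∑ i, fiberWeight p W i * F (p i) = ∑ o, W o * F o := by
  refine (sum_comp (fun o => W o / #{j | p j = o} * F o) p).trans ?_
  rw [image_univ_of_surjective hp]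
  refine sum_congr rfl fun o _ => ?_
  obtain ⟨i, rfl⟩ := hp o
  have : (#{j | p j = p i} : ℝ) ≠ 0 := Nat.cast_ne_zero.2 (card_ne_zero.2 ⟨i, by simp⟩)
  rw [nsmul_eq_mul]
  field_simp

lemma sum_fiberWeight (hp : Surjective p) (W : J → ℝ) : ∑ i, fiberWeight p W i = ∑ o, W o := by
  simpa using sum_fiberWeight_mul hp W 1

lemma weightedFramePotential_comp_fiberWeight {E κ : Type*} [SeminormedAddCommGroup E]
    [InnerProductSpace ℂ E] [Fintype κ] (hp : Surjective p) (e : J → κ → E) (W : J → ℝ) :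
    weightedFramePotential (fun i => e (p i)) (fiberWeight p W) = weightedFramePotential e W := by
  have h : ∀ o, ∑ i, fiberWeight p W i * framePotential (e o) (e (p i)) =
      ∑ o', W o' * framePotential (e o) (e o') := fun o =>
    sum_fiberWeight_mul hp W fun o' => framePotential (e o) (e o')
  simp only [weightedFramePotential, mul_assoc, ← mul_sum, h]
  exact sum_fiberWeight_mul hp W fun o => ∑ o', W o' * framePotential (e o) (e o')

end FiberWeight

lemma sum_sum_inv_mul {Γ M : Type*} [Group Γ] [Fintype Γ] [AddCommMonoid M] (F : Γ → M) :
    ∑ g, ∑ g', F (g⁻¹ * g') = Fintype.card Γ • ∑ g, F g := by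
  simp [fun g => Fintype.sum_equiv (Equiv.mulLeft g⁻¹) (fun g' => F (g⁻¹ * g')) F fun _ => rfl]

lemma Complex.ofReal_norm_pow_four (z : ℂ) : ((‖z‖ ^ 4 : ℝ) : ℂ) = (z * conj z) ^ 2 := by
  rw [Complex.mul_conj, Complex.normSq_eq_norm_sq]
  push_cast
  ring

section AddEnergy

variable {G H : Type*} [AddCommGroup G] [Fintype G] [AddCommGroup H] [DecidableEq H]

lemma card_filter_diff_eq_of_diffOneUniform {f : G → H} (hf : DiffOneUniform f) {t : G}
    (ht : t ≠ 0) :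
    #{p : G × G | f (p.1 + t) - f p.1 = f (p.2 + t) - f p.2} = Fintype.card G := by
  have : ({p : G × G | f (p.1 + t) - f p.1 = f (p.2 + t) - f p.2} : Finset _) = univ.diag := by
    ext ⟨x, y⟩
    simp only [mem_filter, mem_univ, true_and, mem_diag]
    exact ⟨fun h => hf t _ (fun h0 => ht h0.1) x y h rfl, fun h => h ▸ rfl⟩
  rw [this, diag_card, card_univ]

variable [DecidableEq G]

/-- `Finset.addEnergy` of the graph `{(x, f x)}` of `f`, counted on `G`. -/
def graphAddEnergy (f : G → H) : ℕ :=
  #{q : (G × G) × (G × G) | q.1.1 + q.2.1 = q.1.2 + q.2.2 ∧ f q.1.1 + f q.2.1 = f q.1.2 + f q.2.2}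

lemma sum_sum_norm_sum_addChar_pow_four [Fintype H] (f : G → H) :
    ∑ φ : AddChar H ℂ, ∑ μ : AddChar G ℂ, ‖∑ x, φ (f x) * μ x‖ ^ 4 =
      Fintype.card H * Fintype.card G * graphAddEnergy f := by
  have expand : ∀ (φ : AddChar H ℂ) (μ : AddChar G ℂ), ((‖∑ x, φ (f x) * μ x‖ ^ 4 : ℝ) : ℂ) =
      ∑ q : (G × G) × (G × G), φ (f q.1.1 + f q.2.1 - (f q.1.2 + f q.2.2)) *
        μ (q.1.1 + q.2.1 - (q.1.2 + q.2.2)) := fun φ μ => by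
    have norm_sq : (∑ x, φ (f x) * μ x) * conj (∑ x, φ (f x) * μ x) =
        ∑ p : G × G, φ (f p.1 - f p.2) * μ (p.1 - p.2) := by
      rw [map_sum, sum_mul_sum, ← Fintype.sum_prod_type']
      refine sum_congr rfl fun p _ => ?_
      simp only [map_mul, ← AddChar.map_neg_eq_conj, sub_eq_add_neg, AddChar.map_add_eq_mul]
      ring
    rw [Complex.ofReal_norm_pow_four, norm_sq, sq, sum_mul_sum, ← Fintype.sum_prod_type']
    refine sum_congr rfl fun q _ => ?_
    rw [mul_mul_mul_comm, ← AddChar.map_add_eq_mul, ← AddChar.map_add_eq_mul, sub_add_sub_comm,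
      sub_add_sub_comm]
  suffices h : ∑ φ : AddChar H ℂ, ∑ μ : AddChar G ℂ, ((‖∑ x, φ (f x) * μ x‖ ^ 4 : ℝ) : ℂ) =
      ((Fintype.card H * Fintype.card G * graphAddEnergy f : ℕ) : ℂ) by exact_mod_cast h
  have orthogonality : ∀ (a : H) (b : G), ∑ φ : AddChar H ℂ, ∑ μ : AddChar G ℂ, φ a * μ b =
      if b = 0 ∧ a = 0 then (Fintype.card H * Fintype.card G : ℂ) else 0 := fun a b => by
    simp only [← sum_mul_sum, AddChar.sum_apply_eq_ite, ite_zero_mul_ite_zero, and_comm]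
  simp only [expand]
  conv_lhs => enter [2, φ]; rw [sum_comm]
  rw [sum_comm]
  simp only [orthogonality, sub_eq_zero]
  rw [← sum_filter, sum_const, nsmul_eq_mul, graphAddEnergy]
  push_cast
  ring

lemma graphAddEnergy_eq_card_diff (f : G → H) :
    graphAddEnergy f =
      #{r : G × G × G | f (r.2.1 + r.1) - f r.2.1 = f (r.2.2 + r.1) - f r.2.2} := by
  have shift {a₁ a₂ b₁ b₂ : G} (h : a₁ + b₁ = a₂ + b₂) :
      a₂ + (a₁ - a₂) = a₁ ∧ b₁ + (a₁ - a₂) = b₂ :=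
    ⟨add_sub_cancel _ _, by rw [← add_sub_assoc, add_comm b₁, h, add_sub_cancel_left]⟩
  refine card_nbij' (fun q => (q.1.1 - q.1.2, q.1.2, q.2.1))
    (fun r => ((r.2.1 + r.1, r.2.1), (r.2.2, r.2.2 + r.1))) ?_ ?_ ?_ ?_
  · rintro ⟨⟨a₁, a₂⟩, b₁, b₂⟩ h
    simp only [coe_filter, mem_univ, true_and, Set.mem_ofPred_eq] at h ⊢
    rw [(shift h.1).1, (shift h.1).2, sub_eq_sub_iff_add_eq_add, h.2, add_comm]
  · rintro ⟨t, y, x⟩ h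
    simp only [coe_filter, mem_univ, true_and, Set.mem_ofPred_eq] at h ⊢
    grind
  · rintro ⟨⟨a₁, a₂⟩, b₁, b₂⟩ h
    simp only [coe_filter, mem_univ, true_and, Set.mem_ofPred_eq] at h
    simp [(shift h.1).1, (shift h.1).2]
  · rintro ⟨t, y, x⟩ -
    simp

lemma graphAddEnergy_of_diffOneUniform {f : G → H} (hf : DiffOneUniform f) :
    graphAddEnergy f + Fintype.card G = 2 * Fintype.card G ^ 2 := by
  rw [graphAddEnergy_eq_card_diff, card_filter, Fintype.sum_prod_type]
  simp only [← card_filter]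
  rw [← add_sum_erase _ _ (mem_univ 0),
    sum_congr rfl fun t ht => card_filter_diff_eq_of_diffOneUniform hf (ne_of_mem_erase ht)]
  simp only [add_zero, sub_self, filter_true, card_univ, Fintype.card_prod, sum_const,
    card_erase_of_mem (mem_univ _), smul_eq_mul]
  obtain ⟨d, hd⟩ := Nat.exists_eq_add_one_of_ne_zero (Fintype.card_ne_zero (α := G))
  rw [hd, Nat.add_sub_cancel]
  ring

end AddEnergy

section TwistedFourierBasis

variable {G H : Type*} [AddCommGroup G] [Fintype G] [AddCommGroup H]

def twistedFourierBasis (f : G → H) (ψ : AddChar H ℂ) (χ : AddChar G ℂ) : EuclideanSpace ℂ G :=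
  WithLp.toLp 2 fun x => ((√(Fintype.card G) : ℝ) : ℂ)⁻¹ * (ψ (f x) * χ x)

variable (f : G → H)

@[simp]
lemma twistedFourierBasis_apply (ψ : AddChar H ℂ) (χ : AddChar G ℂ) (x : G) :
    twistedFourierBasis f ψ χ x = ((√(Fintype.card G) : ℝ) : ℂ)⁻¹ * (ψ (f x) * χ x) :=
  rfl

variable [Fintype H]

lemma norm_twistedFourierBasis_apply (ψ : AddChar H ℂ) (χ : AddChar G ℂ) (x : G) :
    ‖twistedFourierBasis f ψ χ x‖ = (√(Fintype.card G))⁻¹ := by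
  simp [AddChar.norm_apply]

lemma inner_twistedFourierBasis (ψ ψ' : AddChar H ℂ) (χ χ' : AddChar G ℂ) :
    ⟪twistedFourierBasis f ψ χ, twistedFourierBasis f ψ' χ'⟫_ℂ =
      (Fintype.card G : ℂ)⁻¹ * ∑ x, (ψ⁻¹ * ψ') (f x) * (χ⁻¹ * χ') x := by
  have hsqrt : ((√(Fintype.card G) : ℝ) : ℂ)⁻¹ * ((√(Fintype.card G) : ℝ) : ℂ)⁻¹ =
      (Fintype.card G : ℂ)⁻¹ := by
    rw [← mul_inv, ← Complex.ofReal_mul, Real.mul_self_sqrt (Nat.cast_nonneg _),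
      Complex.ofReal_natCast]
  rw [PiLp.inner_apply, mul_sum]
  refine sum_congr rfl fun x _ => ?_
  simp only [twistedFourierBasis_apply, RCLike.inner_apply, map_mul, map_inv₀,
    Complex.conj_ofReal, AddChar.mul_apply, AddChar.inv_apply', AddChar.inv_apply_eq_conj, ← hsqrt]
  ring

lemma orthonormal_twistedFourierBasis (ψ : AddChar H ℂ) :
    Orthonormal ℂ (twistedFourierBasis f ψ) := by
  rw [orthonormal_iff_ite]
  intro χ χ'
  simp only [inner_twistedFourierBasis, inv_mul_cancel, AddChar.one_apply, one_mul]
  by_cases h : χ = χ'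
  · simp [h]
  · have : χ⁻¹ * χ' ≠ 1 := fun h' => h (inv_mul_eq_one.1 h')
    rw [AddChar.sum_eq_zero_iff_ne_zero.2 this]
    simp [h]

variable [DecidableEq G]

lemma framePotential_single_twistedFourierBasis (ψ : AddChar H ℂ) :
    framePotential (fun x : G => EuclideanSpace.single x (1 : ℂ)) (twistedFourierBasis f ψ) =
      1 := by
  have hd : (0 : ℝ) < Fintype.card G := Nat.cast_pos.2 Fintype.card_pos
  rw [framePotential_eq_of_norm_inner_eq (c := (√(Fintype.card G))⁻¹) fun x χ => by
    rw [EuclideanSpace.inner_single_left, map_one, one_mul, norm_twistedFourierBasis_apply]]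
  rw [AddChar.card_eq, inv_pow, show 4 = 2 * 2 from rfl, pow_mul, Real.sq_sqrt hd.le]
  field_simp

lemma framePotential_twistedFourierBasis_single (ψ : AddChar H ℂ) :
    framePotential (twistedFourierBasis f ψ) (fun x : G => EuclideanSpace.single x (1 : ℂ)) =
      1 := by
  rw [framePotential_comm, framePotential_single_twistedFourierBasis]

lemma sum_sum_framePotential_twistedFourierBasis [DecidableEq H] :
    ∑ ψ, ∑ ψ', framePotential (twistedFourierBasis f ψ) (twistedFourierBasis f ψ') =
      Fintype.card H ^ 2 * graphAddEnergy f / Fintype.card G ^ 2 := by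
  set S : AddChar H ℂ → AddChar G ℂ → ℝ := fun φ μ => ‖∑ x, φ (f x) * μ x‖ ^ 4
  have expand : ∀ ψ ψ', framePotential (twistedFourierBasis f ψ) (twistedFourierBasis f ψ') =
      ((Fintype.card G : ℝ)⁻¹) ^ 4 * ∑ χ, ∑ χ', S (ψ⁻¹ * ψ') (χ⁻¹ * χ') := fun ψ ψ' => by
    simp only [framePotential, inner_twistedFourierBasis, norm_mul, norm_inv, Complex.norm_natCast,
      mul_pow, ← mul_sum, S]
  have reindex_G : ∀ φ, ∑ χ, ∑ χ', S φ (χ⁻¹ * χ') = Fintype.card G * ∑ μ, S φ μ := fun φ => by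
    rw [sum_sum_inv_mul (S φ), AddChar.card_eq, nsmul_eq_mul]
  have reindex_H := sum_sum_inv_mul (fun φ => ∑ μ, S φ μ)
  simp only [expand, reindex_G, ← mul_sum]
  rw [reindex_H, AddChar.card_eq, nsmul_eq_mul, sum_sum_norm_sum_addChar_pow_four]
  field_simp

end TwistedFourierBasis

section FourierDesign

variable {G H : Type*} [AddCommGroup G] [Fintype G] [AddCommGroup H] [Fintype H]

variable (G H) in
def fourierDesignWeights : Option (AddChar H ℂ) → ℝ
  | none => ((Fintype.card G : ℝ) * (Fintype.card G + 1))⁻¹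
  | some _ => ((Fintype.card H : ℝ) * (Fintype.card G + 1))⁻¹

lemma fourierDesignWeights_pos (o : Option (AddChar H ℂ)) : 0 < fourierDesignWeights G H o := by
  cases o <;> simp only [fourierDesignWeights] <;> positivity

lemma sum_fourierDesignWeights :
    ∑ o, fourierDesignWeights G H o = (Fintype.card G : ℝ)⁻¹ := by
  simp only [Fintype.sum_option, fourierDesignWeights, sum_const, card_univ, AddChar.card_eq,
    nsmul_eq_mul]
  field_simp
  ring

variable [DecidableEq G]

def fourierDesignBases (f : G → H) (eG : Fin (Fintype.card G) ≃ G)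
    (eX : Fin (Fintype.card G) ≃ AddChar G ℂ) :
    Option (AddChar H ℂ) → Fin (Fintype.card G) → EuclideanSpace ℂ (Fin (Fintype.card G))
  | none => LinearIsometryEquiv.piLpCongrLeft 2 ℂ ℂ eG.symm ∘
      (fun x => EuclideanSpace.single x 1) ∘ eG
  | some ψ => LinearIsometryEquiv.piLpCongrLeft 2 ℂ ℂ eG.symm ∘ twistedFourierBasis f ψ ∘ eX

variable (f : G → H) (eG : Fin (Fintype.card G) ≃ G) (eX : Fin (Fintype.card G) ≃ AddChar G ℂ)

lemma orthonormal_fourierDesignBases (o : Option (AddChar H ℂ)) :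
    Orthonormal ℂ (fourierDesignBases f eG eX o) := by
  cases o with
  | none =>
    exact (EuclideanSpace.orthonormal_single.comp eG eG.injective).comp_linearIsometryEquiv _
  | some ψ =>
    exact ((orthonormal_twistedFourierBasis f ψ).comp eX eX.injective).comp_linearIsometryEquiv _

lemma weightedFramePotential_fourierDesignBases [DecidableEq H] (hf : DiffOneUniform f) :
    weightedFramePotential (fourierDesignBases f eG eX) (fourierDesignWeights G H) =
      2 / (Fintype.card G * (Fintype.card G + 1)) := by
  have energy : (graphAddEnergy f : ℝ) = 2 * Fintype.card G ^ 2 - Fintype.card G := by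
    rw [eq_sub_iff_add_eq]; exact_mod_cast graphAddEnergy_of_diffOneUniform hf
  have pairs := sum_sum_framePotential_twistedFourierBasis f
  simp only [weightedFramePotential, Fintype.sum_option, fourierDesignBases, fourierDesignWeights,
    framePotential_map, framePotential_comp_equiv,
    (EuclideanSpace.orthonormal_single (𝕜 := ℂ) (ι := G)).framePotential_self,
    framePotential_single_twistedFourierBasis, framePotential_twistedFourierBasis_single,
    sum_add_distrib, ← mul_sum, pairs, energy, sum_const, card_univ, AddChar.card_eq, nsmul_eq_mul]
  field_simp
  ring

end FourierDesign

end

theorem two_design_bases_of_diffOneUniform {G H : Type*}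
    [AddCommGroup G] [Fintype G] [AddCommGroup H] [Fintype H]
    (f : G → H) (hf : DiffOneUniform f) :
    ∀ m : ℕ, 2 * Fintype.card H ≤ m →
      ∃ e : Fin m → Fin (Fintype.card G) → EuclideanSpace ℂ (Fin (Fintype.card G)),
      ∃ w : Fin m → ℝ,
        (∀ a, Orthonormal ℂ (e a)) ∧ (∀ a, 0 < w a) ∧
        (∑ a, w a = ((Fintype.card G : ℝ))⁻¹) ∧
        ∑ a : Fin m, ∑ b : Fin m, w a * w b *
            ∑ j, ∑ k, ‖(inner ℂ (e a j) (e b k) : ℂ)‖ ^ 4 =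
          2 / ((Fintype.card G : ℝ) * ((Fintype.card G : ℝ) + 1)) := by
  classical
  intro m hm
  obtain ⟨p, hp⟩ : ∃ p : Fin m → Option (AddChar H ℂ), Surjective p := by
    refine exists_surjective_iff.2 ⟨⟨fun _ => none⟩, Embedding.nonempty_of_card_le ?_⟩
    have := Fintype.card_pos (α := H)
    simp only [Fintype.card_option, AddChar.card_eq, Fintype.card_fin]
    omega
  let eG := (Fintype.equivFin G).symm
  let eX := (Fintype.equivFinOfCardEq (AddChar.card_eq (α := G))).symm
  refine ⟨fun a => fourierDesignBases f eG eX (p a), fiberWeight p (fourierDesignWeights G H),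
    fun a => orthonormal_fourierDesignBases f eG eX (p a),
    fun a => fiberWeight_pos (fourierDesignWeights_pos _),
    (sum_fiberWeight hp _).trans sum_fourierDesignWeights, ?_⟩
  exact (weightedFramePotential_comp_fiberWeight hp _ _).trans
    (weightedFramePotential_fourierDesignBases f eG eX hf)
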